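/- Let E and E' be real Hilbert spaces, X ⊆ E and Y ⊆ E' nonempty closed convex sets each of diameter at most D, and f : E × E' → ℝ a function that is μ-strongly-convex–strongly-concave on X × Y and whose saddle operator G(x,y) = (∇_x f(x,y), −∇_y f(x,y)) is ℓ-Lipschitz on X × Y, with 0 < μ ≤ ℓ. Let z* ∈ X × Y be a saddle point of f on X × Y. Let δ ≥ 0 and let g̃ : E × E' → E × E' satisfy ‖g̃(z) − G(z)‖ ≤ δ for all z ∈ X × Y. Let ẑ ∈ X × Y, β ≥ 2ℓ, and define [ẑ]_β = Π_{X×Y}(ẑ − g̃(ẑ)/β). Then: (i) for every z ∈ X × Y, ⟪G([ẑ]_β), [ẑ]_β − z⟫ ≤ 2√2·β·D·‖ẑ − z*‖ + √2·δ·D·((2 + √2)·√(β/μ) + 3); and (ii) ‖[ẑ]_β − z*‖ ≤ (1 + √2·ℓ/β)·‖ẑ − z*‖ + δ·(1/√(βμ) + √2/β). -/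

import Mathlib

/-! The saddle point `z*` solves the variational inequality `⟪G z*, w - z*⟫ ≥ 0` on `X × Y`,
i.e. it is a fixed point of the exact projected step `z ↦ Π(z - G z / β)`. Comparing the two
projections gives (ii). For (i), split `⟪G p, p - z⟫` through `G z*` and `g̃(ẑ)`: the first
piece is controlled by Lipschitz continuity and the diameter `√2·D` of `X × Y`, the last one by
the projection inequality tested at `z*`, and `ℓ ≤ β / 2` absorbs the constants. -/

open RealInnerProductSpace

noncomputable section

variable {E E' : Type*} [NormedAddCommGroup E] [InnerProductSpace ℝ E] [CompleteSpace E]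
  [NormedAddCommGroup E'] [InnerProductSpace ℝ E'] [CompleteSpace E']

/-- The saddle operator `G(x,y) = (∇ₓ f(x,y), −∇_y f(x,y))` on the Hilbert product
`WithLp 2 (E × E')`. -/
def saddleOp (f : E × E' → ℝ) (z : WithLp 2 (E × E')) : WithLp 2 (E × E') :=
  (WithLp.equiv 2 (E × E')).symm
    (gradient (fun u => f (u, (WithLp.equiv 2 (E × E') z).2)) (WithLp.equiv 2 (E × E') z).1,
     -gradient (fun v => f ((WithLp.equiv 2 (E × E') z).1, v)) (WithLp.equiv 2 (E × E') z).2)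

/-- `X × Y` as a subset of the Hilbert product. -/
def prodSet (X : Set E) (Y : Set E') : Set (WithLp 2 (E × E')) :=
  (WithLp.equiv 2 (E × E')) ⁻¹' (X ×ˢ Y)

/-- `p` is the metric projection of `v` onto `S`. -/
def IsProjOn {H : Type*} [NormedAddCommGroup H] (S : Set H) (v p : H) : Prop :=
  p ∈ S ∧ ∀ w ∈ S, ‖v - p‖ ≤ ‖v - w‖

section ProjectedStep

variable {H : Type*} [NormedAddCommGroup H] [InnerProductSpace ℝ H]

theorem IsProjOn.inner_sub_nonpos {S : Set H} {v p : H} (hS : Convex ℝ S)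
    (hp : IsProjOn S v p) : ∀ w ∈ S, ⟪v - p, w - p⟫ ≤ 0 := by
  refine (norm_eq_iInf_iff_real_inner_le_zero hS hp.1).1 (le_antisymm ?_ ?_)
  · have : Nonempty S := ⟨⟨p, hp.1⟩⟩
    exact le_ciInf fun w => hp.2 w w.2
  · exact ciInf_le ⟨0, Set.forall_mem_range.2 fun _ => norm_nonneg _⟩ (⟨p, hp.1⟩ : S)

theorem norm_sub_le_of_inner_sub_nonpos {u u' p q : H} (hp : ⟪u - p, q - p⟫ ≤ 0)
    (hq : ⟪u' - q, p - q⟫ ≤ 0) : ‖p - q‖ ≤ ‖u - u'‖ := by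
  have hsq : ‖p - q‖ ^ 2 ≤ ⟪u - u', p - q⟫ := by
    have : ⟪u - u', p - q⟫ = ‖p - q‖ ^ 2 - ⟪u - p, q - p⟫ - ⟪u' - q, p - q⟫ := by
      rw [← real_inner_self_eq_norm_sq, ← neg_sub p q, inner_neg_right, sub_neg_eq_add,
        ← inner_add_left, ← inner_sub_left]
      congr 1; abel
    linarith
  rcases (norm_nonneg (p - q)).eq_or_lt with h | h
  · exact h ▸ norm_nonneg _
  · nlinarith [real_inner_le_norm (u - u') (p - q)]

variable {S : Set H} {zs zh a g p : H} {β : ℝ}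

theorem IsProjOn.norm_sub_le_of_inner_nonneg (hS : Convex ℝ S) (hβ : 0 ≤ β)
    (hp : IsProjOn S (zh - β⁻¹ • g) p) (hzs : zs ∈ S) (hVI : ∀ w ∈ S, 0 ≤ ⟪a, w - zs⟫) :
    ‖p - zs‖ ≤ ‖zh - zs‖ + β⁻¹ * ‖g - a‖ := by
  have hfix : ⟪(zs - β⁻¹ • a) - zs, p - zs⟫ ≤ 0 := by
    rw [sub_sub_cancel_left, inner_neg_left, real_inner_smul_left, neg_nonpos]
    exact mul_nonneg (inv_nonneg.2 hβ) (hVI p hp.1)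
  calc ‖p - zs‖ ≤ ‖(zh - β⁻¹ • g) - (zs - β⁻¹ • a)‖ :=
        norm_sub_le_of_inner_sub_nonpos (hp.inner_sub_nonpos hS zs hzs) hfix
    _ = ‖(zh - zs) - β⁻¹ • (g - a)‖ := by congr 1; module
    _ ≤ ‖zh - zs‖ + β⁻¹ * ‖g - a‖ := by
        rw [← norm_smul_of_nonneg (inv_nonneg.2 hβ)]; exact norm_sub_le _ _

theorem IsProjOn.inner_sub_le_mul_inner (hS : Convex ℝ S) (hβ : 0 < β)
    (hp : IsProjOn S (zh - β⁻¹ • g) p) {w : H} (hw : w ∈ S) : ⟪g, p - w⟫ ≤ β * ⟪zh - p, p - w⟫ := by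
  have h := hp.inner_sub_nonpos hS w hw
  rw [show zh - β⁻¹ • g - p = (zh - p) - β⁻¹ • g by abel, inner_sub_left, real_inner_smul_left,
    ← neg_sub p w, inner_neg_right, inner_neg_right] at h
  field_simp at h
  linarith

theorem IsProjOn.inner_sub_le_of_inner_nonneg (hS : Convex ℝ S) (hβ : 0 < β)
    (hp : IsProjOn S (zh - β⁻¹ • g) p) (hzs : zs ∈ S) (hVI : ∀ w ∈ S, 0 ≤ ⟪a, w - zs⟫) (b : H)
    {z : H} (hz : z ∈ S) :
    ⟪b, p - z⟫ ≤ ‖b - a‖ * ‖p - z‖ + ‖g - a‖ * ‖p - zs‖ + β / 2 * ‖zh - zs‖ ^ 2 := by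
  have hsplit : ⟪b, p - z⟫ = ⟪b - a, p - z⟫ + ⟪a - g, p - zs⟫ + ⟪g, p - zs⟫ - ⟪a, z - zs⟫ := by
    simp only [inner_sub_left, inner_sub_right]; ring
  have hstep : ⟪g, p - zs⟫ ≤ β / 2 * ‖zh - zs‖ ^ 2 := by
    have hpar : 2 * ⟪zh - p, p - zs⟫ ≤ ‖zh - zs‖ ^ 2 := by
      have := norm_add_sq_real (zh - p) (p - zs)
      rw [sub_add_sub_cancel] at this
      nlinarith [sq_nonneg ‖zh - p‖, sq_nonneg ‖p - zs‖]
    nlinarith [hp.inner_sub_le_mul_inner hS hβ hzs]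
  have h1 := real_inner_le_norm (b - a) (p - z)
  have h2 := real_inner_le_norm (a - g) (p - zs)
  rw [norm_sub_rev a g] at h2
  linarith [hVI z hz]

variable {G : H → H} {ℓ δ K : ℝ}

theorem IsProjOn.norm_sub_le_of_lipschitzOn (hS : Convex ℝ S) (hβ : 0 ≤ β)
    (hlip : ∀ z₁ ∈ S, ∀ z₂ ∈ S, ‖G z₁ - G z₂‖ ≤ ℓ * ‖z₁ - z₂‖)
    (hzs : zs ∈ S) (hVI : ∀ w ∈ S, 0 ≤ ⟪G zs, w - zs⟫) (hzh : zh ∈ S) (hg : ‖g - G zh‖ ≤ δ)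
    (hp : IsProjOn S (zh - β⁻¹ • g) p) :
    ‖p - zs‖ ≤ ‖zh - zs‖ + β⁻¹ * (δ + ℓ * ‖zh - zs‖) := by
  have hgzs : ‖g - G zs‖ ≤ δ + ℓ * ‖zh - zs‖ :=
    (norm_sub_le_norm_sub_add_norm_sub _ _ _).trans (add_le_add hg (hlip zh hzh zs hzs))
  calc ‖p - zs‖ ≤ ‖zh - zs‖ + β⁻¹ * ‖g - G zs‖ := hp.norm_sub_le_of_inner_nonneg hS hβ hzs hVI
    _ ≤ ‖zh - zs‖ + β⁻¹ * (δ + ℓ * ‖zh - zs‖) := by gcongr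

theorem IsProjOn.inner_sub_le_of_lipschitzOn (hS : Convex ℝ S)
    (hdiam : ∀ z₁ ∈ S, ∀ z₂ ∈ S, ‖z₁ - z₂‖ ≤ K) (hℓ : 0 ≤ ℓ) (hℓβ : 2 * ℓ ≤ β) (hβ : 0 < β)
    (hlip : ∀ z₁ ∈ S, ∀ z₂ ∈ S, ‖G z₁ - G z₂‖ ≤ ℓ * ‖z₁ - z₂‖)
    (hzs : zs ∈ S) (hVI : ∀ w ∈ S, 0 ≤ ⟪G zs, w - zs⟫) (hzh : zh ∈ S) (hg : ‖g - G zh‖ ≤ δ)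
    (hp : IsProjOn S (zh - β⁻¹ • g) p) {z : H} (hz : z ∈ S) :
    ⟪G p, p - z⟫ ≤ K * (2 * β * ‖zh - zs‖ + 3 * δ) := by
  set d := ‖zh - zs‖
  set r := ‖p - zs‖
  have hδ : 0 ≤ δ := (norm_nonneg _).trans hg
  have hd : d ≤ K := hdiam zh hzh zs hzs
  have hr : r ≤ K := hdiam p hp.1 zs hzs
  have hd0 : 0 ≤ d := norm_nonneg _
  have hr0 : 0 ≤ r := norm_nonneg _
  have hK : 0 ≤ K := hd0.trans hd
  have hgzs : ‖g - G zs‖ ≤ δ + ℓ * d :=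
    (norm_sub_le_norm_sub_add_norm_sub _ _ _).trans (add_le_add hg (hlip zh hzh zs hzs))
  have hβr : β * r ≤ β * d + δ + ℓ * d := by
    have := hp.norm_sub_le_of_lipschitzOn hS hβ.le hlip hzs hVI hzh hg
    calc β * r ≤ β * (d + β⁻¹ * (δ + ℓ * d)) := by gcongr
      _ = β * d + δ + ℓ * d := by field_simp; ring
  have hGp : ‖G p - G zs‖ * ‖p - z‖ ≤ ℓ * r * K :=
    mul_le_mul (hlip p hp.1 zs hzs) (hdiam p hp.1 z hz) (norm_nonneg _) (by positivity)
  have hgr : ‖g - G zs‖ * r ≤ (δ + ℓ * d) * K :=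
    mul_le_mul hgzs hr (norm_nonneg _) (by positivity)
  calc ⟪G p, p - z⟫ ≤ ‖G p - G zs‖ * ‖p - z‖ + ‖g - G zs‖ * r + β / 2 * d ^ 2 :=
        hp.inner_sub_le_of_inner_nonneg hS hβ hzs hVI (G p) hz
    _ ≤ ℓ * r * K + (δ + ℓ * d) * K + β / 2 * d * K := by
        have hsq : β / 2 * d ^ 2 ≤ β / 2 * d * K := by rw [sq, ← mul_assoc]; gcongr
        linarith
    _ ≤ (3 / 4 * β * d + δ / 2) * K + (δ + β / 2 * d) * K + β / 2 * d * K := by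
        have hℓr : ℓ * r ≤ 3 / 4 * β * d + δ / 2 := by
          nlinarith [mul_nonneg (sub_nonneg.2 hℓβ) hr0, mul_nonneg (sub_nonneg.2 hℓβ) hd0]
        gcongr
        linarith
    _ ≤ K * (2 * β * d + 3 * δ) := by
        nlinarith [mul_nonneg (mul_nonneg hK hβ.le) hd0, mul_nonneg hK hδ]

end ProjectedStep

section FirstOrder

variable {H : Type*} [NormedAddCommGroup H] [InnerProductSpace ℝ H] [CompleteSpace H]
  {φ : H → ℝ} {S : Set H} {a w : H}

theorem IsMinOn.inner_gradient_sub_nonneg (hS : Convex ℝ S) (hmin : IsMinOn φ S a)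
    (hd : DifferentiableAt ℝ φ a) (ha : a ∈ S) (hw : w ∈ S) : 0 ≤ ⟪gradient φ a, w - a⟫ := by
  simpa using hmin.localize.hasFDerivWithinAt_nonneg hd.hasGradientAt.hasFDerivAt.hasFDerivWithinAt
    (sub_mem_posTangentConeAt_of_segment_subset (hS.segment_subset ha hw))

theorem IsMaxOn.inner_gradient_sub_nonpos (hS : Convex ℝ S) (hmax : IsMaxOn φ S a)
    (hd : DifferentiableAt ℝ φ a) (ha : a ∈ S) (hw : w ∈ S) : ⟪gradient φ a, w - a⟫ ≤ 0 := by
  simpa using hmax.localize.hasFDerivWithinAt_nonpos hd.hasGradientAt.hasFDerivAt.hasFDerivWithinAt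
    (sub_mem_posTangentConeAt_of_segment_subset (hS.segment_subset ha hw))

end FirstOrder

theorem WithLp.prod_norm_le_sqrt_two_mul {α β : Type*} [SeminormedAddCommGroup α]
    [SeminormedAddCommGroup β] {z : WithLp 2 (α × β)} {D : ℝ} (h₁ : ‖z.fst‖ ≤ D)
    (h₂ : ‖z.snd‖ ≤ D) : ‖z‖ ≤ √2 * D := by
  have hD : 0 ≤ D := (norm_nonneg _).trans h₁
  rw [← Real.sqrt_sq (norm_nonneg _), WithLp.prod_norm_sq_eq_of_L2, ← Real.sqrt_sq hD,
    ← Real.sqrt_mul zero_le_two]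
  gcongr
  nlinarith [norm_nonneg z.fst, norm_nonneg z.snd]

theorem IsSaddlePointOn.inner_saddleOp_sub_nonneg {X : Set E} {Y : Set E'} {f : E × E' → ℝ}
    {zs : WithLp 2 (E × E')} (hX : Convex ℝ X) (hY : Convex ℝ Y) (hzs : zs ∈ prodSet X Y)
    (hsaddle : IsSaddlePointOn X Y (fun x y => f (x, y)) zs.fst zs.snd)
    (hdx : DifferentiableAt ℝ (fun u => f (u, zs.snd)) zs.fst)
    (hdy : DifferentiableAt ℝ (fun v => f (zs.fst, v)) zs.snd)
    {w : WithLp 2 (E × E')} (hw : w ∈ prodSet X Y) : 0 ≤ ⟪saddleOp f zs, w - zs⟫ := by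
  have hmin : IsMinOn (fun u => f (u, zs.snd)) X zs.fst := fun x hx => hsaddle x hx _ hzs.2
  have hmax : IsMaxOn (fun v => f (zs.fst, v)) Y zs.snd := fun y hy => hsaddle _ hzs.1 y hy
  have hx := hmin.inner_gradient_sub_nonneg hX hdx hzs.1 hw.1
  have hy := hmax.inner_gradient_sub_nonpos hY hdy hzs.2 hw.2
  simp only [saddleOp, WithLp.prod_inner_apply, WithLp.equiv_symm_apply, inner_neg_left]
  exact le_add_of_nonneg_of_le hx (neg_nonneg.2 hy)

theorem inexact_gda_step_stopping_criterion_general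
    (X : Set E) (Y : Set E') (hXcv : Convex ℝ X) (hYcv : Convex ℝ Y)
    (D : ℝ) (hXD : ∀ s₁ ∈ X, ∀ s₂ ∈ X, ‖s₁ - s₂‖ ≤ D) (hYD : ∀ s₁ ∈ Y, ∀ s₂ ∈ Y, ‖s₁ - s₂‖ ≤ D)
    (f : E × E' → ℝ) (μ ℓ : ℝ) (hμ : 0 < μ) (hμℓ : μ ≤ ℓ)
    (hdx : ∀ x ∈ X, ∀ y ∈ Y, DifferentiableAt ℝ (fun u => f (u, y)) x)
    (hdy : ∀ x ∈ X, ∀ y ∈ Y, DifferentiableAt ℝ (fun v => f (x, v)) y)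
    (hlip : ∀ z₁ ∈ prodSet X Y, ∀ z₂ ∈ prodSet X Y,
      ‖saddleOp f z₁ - saddleOp f z₂‖ ≤ ℓ * ‖z₁ - z₂‖)
    (zs : WithLp 2 (E × E')) (hzsS : zs ∈ prodSet X Y)
    (hsaddle : ∀ x ∈ X, ∀ y ∈ Y,
      f ((WithLp.equiv 2 (E × E') zs).1, y) ≤ f (WithLp.equiv 2 (E × E') zs) ∧
      f (WithLp.equiv 2 (E × E') zs) ≤ f (x, (WithLp.equiv 2 (E × E') zs).2))
    (δ : ℝ)
    (gt : WithLp 2 (E × E') → WithLp 2 (E × E'))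
    (hgt : ∀ z ∈ prodSet X Y, ‖gt z - saddleOp f z‖ ≤ δ)
    (zh : WithLp 2 (E × E')) (hzh : zh ∈ prodSet X Y)
    (β : ℝ) (hβ : 2 * ℓ ≤ β)
    (p : WithLp 2 (E × E')) (hp : IsProjOn (prodSet X Y) (zh - β⁻¹ • gt zh) p) :
    (∀ z ∈ prodSet X Y,
      ⟪saddleOp f p, p - z⟫ ≤
        2 * Real.sqrt 2 * β * D * ‖zh - zs‖ +
          Real.sqrt 2 * δ * D * ((2 + Real.sqrt 2) * Real.sqrt (β / μ) + 3)) ∧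
    ‖p - zs‖ ≤ (1 + Real.sqrt 2 * ℓ / β) * ‖zh - zs‖ +
      δ * (1 / Real.sqrt (β * μ) + Real.sqrt 2 / β) := by
  have hℓ : 0 < ℓ := hμ.trans_le hμℓ
  have hβ0 : 0 < β := by linarith
  have hδ : 0 ≤ δ := (norm_nonneg _).trans (hgt zh hzh)
  have hD : 0 ≤ D := by simpa using hXD _ hzsS.1 _ hzsS.1
  have hT : Convex ℝ (prodSet X Y) :=
    (hXcv.prod hYcv).linear_preimage (WithLp.linearEquiv 2 ℝ (E × E')).toLinearMap
  have hdiam : ∀ z₁ ∈ prodSet X Y, ∀ z₂ ∈ prodSet X Y, ‖z₁ - z₂‖ ≤ √2 * D :=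
    fun z₁ h₁ z₂ h₂ => WithLp.prod_norm_le_sqrt_two_mul (hXD _ h₁.1 _ h₂.1) (hYD _ h₁.2 _ h₂.2)
  have hVI : ∀ w ∈ prodSet X Y, 0 ≤ ⟪saddleOp f zs, w - zs⟫ := fun w hw =>
    IsSaddlePointOn.inner_saddleOp_sub_nonneg hXcv hYcv hzsS
      (fun x hx y hy => (hsaddle x hx y hy).1.trans (hsaddle x hx y hy).2)
      (hdx _ hzsS.1 _ hzsS.2) (hdy _ hzsS.1 _ hzsS.2) hw
  refine ⟨fun z hz => ?_, ?_⟩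
  · calc ⟪saddleOp f p, p - z⟫ ≤ √2 * D * (2 * β * ‖zh - zs‖ + 3 * δ) :=
          hp.inner_sub_le_of_lipschitzOn hT hdiam hℓ.le hβ hβ0 hlip hzsS hVI hzh (hgt zh hzh) hz
      _ ≤ _ := by
          have : 0 ≤ √2 * δ * D * ((2 + √2) * √(β / μ)) := by positivity
          linarith
  · calc ‖p - zs‖ ≤ ‖zh - zs‖ + β⁻¹ * (δ + ℓ * ‖zh - zs‖) :=
          hp.norm_sub_le_of_lipschitzOn hT hβ0.le hlip hzsS hVI hzh (hgt zh hzh)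
      _ = (1 + 1 * ℓ / β) * ‖zh - zs‖ + δ * (0 + 1 / β) := by ring
      _ ≤ (1 + √2 * ℓ / β) * ‖zh - zs‖ + δ * (1 / √(β * μ) + √2 / β) := by
          gcongr <;> simp [Real.one_le_sqrt]

/-- Lemma C.3.  One inexact GDA step `[ẑ]_β = Π_{X×Y}(ẑ − g̃(ẑ)/β)` with
`β ≥ 2ℓ` satisfies, for every `z ∈ X × Y`:
(i) `⟪G([ẑ]_β), [ẑ]_β − z⟫ ≤ 2√2·β·D·‖ẑ − z*‖ + √2·δ·D·((2 + √2)·√(β/μ) + 3)`; and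
(ii) `‖[ẑ]_β − z*‖ ≤ (1 + √2·ℓ/β)·‖ẑ − z*‖ + δ·(1/√(βμ) + √2/β)`. -/
theorem inexact_gda_step_stopping_criterion
    (X : Set E) (Y : Set E') (hXne : X.Nonempty) (hYne : Y.Nonempty)
    (hXcl : IsClosed X) (hYcl : IsClosed Y) (hXcv : Convex ℝ X) (hYcv : Convex ℝ Y)
    (D : ℝ) (hXD : ∀ s₁ ∈ X, ∀ s₂ ∈ X, ‖s₁ - s₂‖ ≤ D) (hYD : ∀ s₁ ∈ Y, ∀ s₂ ∈ Y, ‖s₁ - s₂‖ ≤ D)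
    (f : E × E' → ℝ) (μ ℓ : ℝ) (hμ : 0 < μ) (hμℓ : μ ≤ ℓ)
    (hdx : ∀ x ∈ X, ∀ y ∈ Y, DifferentiableAt ℝ (fun u => f (u, y)) x)
    (hdy : ∀ x ∈ X, ∀ y ∈ Y, DifferentiableAt ℝ (fun v => f (x, v)) y)
    (hscx : ∀ y ∈ Y, ConvexOn ℝ X (fun x => f (x, y) - μ / 2 * ‖x‖ ^ 2))
    (hscy : ∀ x ∈ X, ConvexOn ℝ Y (fun y => -f (x, y) - μ / 2 * ‖y‖ ^ 2))
    (hlip : ∀ z₁ ∈ prodSet X Y, ∀ z₂ ∈ prodSet X Y,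
      ‖saddleOp f z₁ - saddleOp f z₂‖ ≤ ℓ * ‖z₁ - z₂‖)
    (zs : WithLp 2 (E × E')) (hzsS : zs ∈ prodSet X Y)
    (hsaddle : ∀ x ∈ X, ∀ y ∈ Y,
      f ((WithLp.equiv 2 (E × E') zs).1, y) ≤ f (WithLp.equiv 2 (E × E') zs) ∧
      f (WithLp.equiv 2 (E × E') zs) ≤ f (x, (WithLp.equiv 2 (E × E') zs).2))
    (δ : ℝ) (hδ : 0 ≤ δ)
    (gt : WithLp 2 (E × E') → WithLp 2 (E × E'))
    (hgt : ∀ z ∈ prodSet X Y, ‖gt z - saddleOp f z‖ ≤ δ)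
    (zh : WithLp 2 (E × E')) (hzh : zh ∈ prodSet X Y)
    (β : ℝ) (hβ : 2 * ℓ ≤ β)
    (p : WithLp 2 (E × E')) (hp : IsProjOn (prodSet X Y) (zh - β⁻¹ • gt zh) p) :
    (∀ z ∈ prodSet X Y,
      ⟪saddleOp f p, p - z⟫ ≤
        2 * Real.sqrt 2 * β * D * ‖zh - zs‖ +
          Real.sqrt 2 * δ * D * ((2 + Real.sqrt 2) * Real.sqrt (β / μ) + 3)) ∧
    ‖p - zs‖ ≤ (1 + Real.sqrt 2 * ℓ / β) * ‖zh - zs‖ +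
      δ * (1 / Real.sqrt (β * μ) + Real.sqrt 2 / β) :=
  inexact_gda_step_stopping_criterion_general X Y hXcv hYcv D hXD hYD f μ ℓ hμ hμℓ hdx hdy hlip zs
    hzsS hsaddle δ gt hgt zh hzh β hβ p hp
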